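/- arXiv:2503.08922 — 2 statements merged into one kernel-verified Lean document; each statement's English description precedes it below -/
import Mathlib

section
/- Let W = W_f and W' = W_g be closed star-shaped domains in ℝ^{2n}, let F be a symplectomorphism from int W onto int W' with inverse F^{-1}, let λ > 1, and let ξ ∈ (1, λ) satisfy F(λ^{-1}•W) ⊆ ξ^{-1}•(int W'). Then there is an open set V with λ^{-1}•W ⊆ V ⊆ int W such that for every t ∈ [1, ξ] and every x ∈ V: (i) t^{-1}·F(x) ∈ int W', so h_t(x) := t·F^{-1}(t^{-1}·F(x)) is defined; (ii) h_t(x) ∈ λ•(int W); (iii) each h_t : V → ℝ^{2n} is an injective symplectic map; (iv) the map (t, x) ↦ h_t(x) is smooth on [1, ξ] × V; and (v) h_1 is the inclusion of V into λ•(int W). -/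
open Pointwise

/-- `ℝ^{2n}` identified with `(Fin n → ℝ) × (Fin n → ℝ)`. -/
abbrev ESp (n : ℕ) := (Fin n → ℝ) × (Fin n → ℝ)

/-- The standard symplectic form on `ℝ^{2n} = (Fin n → ℝ) × (Fin n → ℝ)`:
`ω((u,v),(u',v')) = Σ_i (u_i v'_i − v_i u'_i)`. -/
noncomputable def stdSymp {n : ℕ} (z w : ESp n) : ℝ :=
  ∑ i, (z.1 i * w.2 i - z.2 i * w.1 i)

/-- The closed star-shaped domain `W_g = {0} ∪ {x ≠ 0 : ‖x‖ ≤ g(x/‖x‖)}` determined by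
a function `g` on the unit sphere. -/
def starDom {n : ℕ} (g : ESp n → ℝ) : Set (ESp n) :=
  {0} ∪ {x | x ≠ 0 ∧ ‖x‖ ≤ g (‖x‖⁻¹ • x)}

/-- The interior `int W_g = {0} ∪ {x ≠ 0 : ‖x‖ < g(x/‖x‖)}` of the closed star-shaped
domain determined by `g`. -/
def starDomInt {n : ℕ} (g : ESp n → ℝ) : Set (ESp n) :=
  {0} ∪ {x | x ≠ 0 ∧ ‖x‖ < g (‖x‖⁻¹ • x)}

/-- `F` is a symplectic map on `U`: it is smooth on `U` and its derivative preserves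
the standard symplectic form at every point of `U`. -/
def IsSympOn {n : ℕ} (F : ESp n → ESp n) (U : Set (ESp n)) : Prop :=
  ContDiffOn ℝ (⊤ : ℕ∞) F U ∧
  ∀ x ∈ U, ∀ ζ ζ' : ESp n,
    stdSymp (fderiv ℝ F x ζ) (fderiv ℝ F x ζ') = stdSymp ζ ζ'

/-- `F` is a symplectomorphism from `U` onto `U'` with inverse `G`: both `F` and `G`
are symplectic maps, `F` maps `U` into `U'`, `G` maps `U'` into `U`, and they are
mutually inverse. -/
def IsSymplectomorphism {n : ℕ} (F G : ESp n → ESp n) (U U' : Set (ESp n)) : Prop :=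
  IsSympOn F U ∧ IsSympOn G U' ∧ Set.MapsTo F U U' ∧ Set.MapsTo G U' U ∧
  (∀ x ∈ U, G (F x) = x) ∧ (∀ y ∈ U', F (G y) = y)

/-- `lam > 1` is `(W_f, W_g)`-admissible: there are a symplectic embedding `φ` of an
open neighborhood of `lam⁻¹ • W_f` into `int W_g` and a symplectic embedding `ψ` of an
open neighborhood of `W_g` into `lam • int W_f` such that `ψ ∘ φ` is isotopic to the
inclusion through symplectic embeddings of a fixed open neighborhood of `lam⁻¹ • W_f`
into `lam • int W_f` (unknottedness). -/
def SBMAdmissible {n : ℕ} (lam : ℝ) (f g : ESp n → ℝ) : Prop :=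
  1 < lam ∧
  ∃ (A B : Set (ESp n)) (φ ψ : ESp n → ESp n),
    IsOpen A ∧ lam⁻¹ • starDom f ⊆ A ∧
    IsSympOn φ A ∧ Set.InjOn φ A ∧ φ '' A ⊆ starDomInt g ∧
    IsOpen B ∧ starDom g ⊆ B ∧
    IsSympOn ψ B ∧ Set.InjOn ψ B ∧ ψ '' B ⊆ lam • starDomInt f ∧
    ∃ (A' : Set (ESp n)) (h : ℝ → ESp n → ESp n),
      IsOpen A' ∧ lam⁻¹ • starDom f ⊆ A' ∧
      ContDiffOn ℝ (⊤ : ℕ∞) (fun p : ℝ × ESp n => h p.1 p.2) (Set.Icc (0:ℝ) 1 ×ˢ A') ∧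
      (∀ t ∈ Set.Icc (0:ℝ) 1,
        IsSympOn (h t) A' ∧ Set.InjOn (h t) A' ∧ h t '' A' ⊆ lam • starDomInt f) ∧
      (∀ x ∈ A', h 0 x = x) ∧
      (∀ x ∈ lam⁻¹ • starDom f, h 1 x = ψ (φ x))

/-- `δ(W_f, W_g) = inf {ln lam : lam is (W_f, W_g)-admissible}`. -/
noncomputable def sbmDelta {n : ℕ} (f g : ESp n → ℝ) : ℝ :=
  sInf (Real.log '' {lam : ℝ | SBMAdmissible lam f g})

/-- The symplectic Banach–Mazur distance
`d_SBM(W_f, W_g) = max {δ(W_f, W_g), δ(W_g, W_f)}`. -/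
noncomputable def sbmDist {n : ℕ} (f g : ESp n → ℝ) : ℝ :=
  max (sbmDelta f g) (sbmDelta g f)

lemma dir_smul {n : ℕ} {c : ℝ} (hc : 0 < c) (x : ESp n) :
    ‖c • x‖⁻¹ • (c • x) = ‖x‖⁻¹ • x := by
  rcases eq_or_ne x 0 with rfl | hx
  · simp
  · have hc' : c ≠ 0 := hc.ne'
    have hx' : ‖x‖ ≠ 0 := norm_ne_zero_iff.2 hx
    rw [norm_smul, Real.norm_eq_abs, abs_of_pos hc, smul_smul]
    congr 1
    field_simp

lemma smul_mem_starDomInt {n : ℕ} (g : ESp n → ℝ) {c : ℝ} {x : ESp n}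
    (hx : x ∈ starDomInt g) (h0 : 0 < c) (h1 : c ≤ 1) : c • x ∈ starDomInt g := by
  rcases hx with hx | ⟨hne, hlt⟩
  · left; simp only [Set.mem_singleton_iff] at hx ⊢; rw [hx, smul_zero]
  · right
    refine ⟨smul_ne_zero h0.ne' hne, ?_⟩
    rw [dir_smul h0, norm_smul, Real.norm_eq_abs, abs_of_pos h0]
    exact lt_of_le_of_lt (mul_le_of_le_one_left (norm_nonneg x) h1) hlt

lemma smul_starDom_subset {n : ℕ} (f : ESp n → ℝ) {c : ℝ} (h0 : 0 < c) (h1 : c < 1) :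
    c • starDom f ⊆ starDomInt f := by
  rintro _ ⟨y, hy, rfl⟩
  rcases hy with hy | ⟨hne, hle⟩
  · left; simp only [Set.mem_singleton_iff] at hy ⊢; rw [hy, smul_zero]
  · right
    refine ⟨smul_ne_zero h0.ne' hne, ?_⟩
    rw [dir_smul h0, norm_smul, Real.norm_eq_abs, abs_of_pos h0]
    have hylt : c * ‖y‖ < ‖y‖ := by
      have : 0 < ‖y‖ := norm_pos_iff.2 hne
      nlinarith
    exact lt_of_lt_of_le hylt hle

lemma isOpen_starDomInt {n : ℕ} (g : ESp n → ℝ)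
    (hg : ContinuousOn g (Metric.sphere (0 : ESp n) 1))
    (hgpos : ∀ x ∈ Metric.sphere (0 : ESp n) 1, 0 < g x) :
    IsOpen (starDomInt g) := by
  obtain ⟨ε, hε, hεle⟩ : ∃ ε : ℝ, 0 < ε ∧ ∀ y ∈ Metric.sphere (0 : ESp n) 1, ε ≤ g y := by
    rcases (Metric.sphere (0 : ESp n) 1).eq_empty_or_nonempty with hS | hS
    · exact ⟨1, one_pos, by simp [hS]⟩
    · obtain ⟨y0, hy0, hmin⟩ := (isCompact_sphere (0 : ESp n) 1).exists_isMinOn hS hg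
      exact ⟨g y0, hgpos y0 hy0, hmin⟩
  have hdir : ∀ x : ESp n, x ≠ 0 → (‖x‖⁻¹ • x) ∈ Metric.sphere (0 : ESp n) 1 := by
    intro x hx
    have hx' : ‖x‖ ≠ 0 := norm_ne_zero_iff.2 hx
    simp [norm_smul, abs_of_nonneg (norm_nonneg x), inv_mul_cancel₀ hx']
  have hA : IsOpen {x : ESp n | x ≠ 0 ∧ ‖x‖ < g (‖x‖⁻¹ • x)} := by
    have hcont : ContinuousOn (fun x : ESp n => g (‖x‖⁻¹ • x) - ‖x‖) {x : ESp n | x ≠ 0} := by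
      apply ContinuousOn.sub
      · apply hg.comp
        · exact ((continuousOn_id.norm.inv₀ (fun x hx => norm_ne_zero_iff.2 hx)).smul
            continuousOn_id)
        · intro x hx; exact hdir x hx
      · exact continuous_norm.continuousOn
    have h0 : IsOpen {x : ESp n | x ≠ 0} := isOpen_compl_singleton
    have := hcont.isOpen_inter_preimage h0 (isOpen_Ioi (a := (0:ℝ)))
    convert this using 1
    ext x
    simp only [Set.mem_setOf_eq, Set.mem_inter_iff, Set.mem_preimage, Set.mem_Ioi]
    constructor
    · rintro ⟨h1, h2⟩; exact ⟨h1, by linarith⟩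
    · rintro ⟨h1, h2⟩; exact ⟨h1, by linarith⟩
  have heq : starDomInt g = Metric.ball (0 : ESp n) ε ∪ {x : ESp n | x ≠ 0 ∧ ‖x‖ < g (‖x‖⁻¹ • x)} := by
    ext x
    constructor
    · rintro (hx | hx)
      · left; simp only [Set.mem_singleton_iff] at hx; simp [hx, hε]
      · right; exact hx
    · rintro (hx | hx)
      · rcases eq_or_ne x 0 with rfl | hne
        · left; rfl
        · right
          refine ⟨hne, ?_⟩
          have := hεle _ (hdir x hne)
          have hxn : ‖x‖ < ε := by simpa [dist_eq_norm] using hx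
          linarith
      · right; exact hx
  rw [heq]
  exact Metric.isOpen_ball.union hA
/-- Let `W = W_f`, `W' = W_g` be closed star-shaped domains in `ℝ^{2n}`,
`F` a symplectomorphism from `int W` onto `int W'` with inverse `F'`, `lam > 1`, and
`ξ ∈ (1, lam)` with `F(lam⁻¹ • W) ⊆ ξ⁻¹ • int W'`. Then there is an open set `V` with
`lam⁻¹ • W ⊆ V ⊆ int W` such that for all `t ∈ [1, ξ]` and `x ∈ V`:
(i) `t⁻¹ • F x ∈ int W'`, so `h_t(x) := t • F'(t⁻¹ • F x)` is defined;
(ii) `h_t(x) ∈ lam • int W`;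
(iii) each `h_t` is an injective symplectic map on `V`;
(iv) `(t, x) ↦ h_t(x)` is smooth on `[1, ξ] × V`; and
(v) `h_1` is the inclusion of `V` into `lam • int W`. -/
theorem stmt_11 {n : ℕ} (f g : ESp n → ℝ)
    (hf : ContinuousOn f (Metric.sphere (0 : ESp n) 1))
    (hfpos : ∀ x ∈ Metric.sphere (0 : ESp n) 1, 0 < f x)
    (hg : ContinuousOn g (Metric.sphere (0 : ESp n) 1))
    (hgpos : ∀ x ∈ Metric.sphere (0 : ESp n) 1, 0 < g x)
    (F F' : ESp n → ESp n)
    (hF : IsSymplectomorphism F F' (starDomInt f) (starDomInt g))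
    (lam ξ : ℝ) (hξ1 : 1 < ξ) (hξlam : ξ < lam)
    (hsub : F '' (lam⁻¹ • starDom f) ⊆ ξ⁻¹ • starDomInt g) :
    ∃ V : Set (ESp n), IsOpen V ∧ lam⁻¹ • starDom f ⊆ V ∧ V ⊆ starDomInt f ∧
      (∀ t ∈ Set.Icc (1 : ℝ) ξ, ∀ x ∈ V,
        t⁻¹ • F x ∈ starDomInt g ∧
        t • F' (t⁻¹ • F x) ∈ lam • starDomInt f) ∧
      (∀ t ∈ Set.Icc (1 : ℝ) ξ,
        Set.InjOn (fun x => t • F' (t⁻¹ • F x)) V ∧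
        IsSympOn (fun x => t • F' (t⁻¹ • F x)) V) ∧
      ContDiffOn ℝ (⊤ : ℕ∞) (fun p : ℝ × ESp n => p.1 • F' (p.1⁻¹ • F p.2))
        (Set.Icc (1 : ℝ) ξ ×ˢ V) ∧
      (∀ x ∈ V, (1 : ℝ) • F' ((1 : ℝ)⁻¹ • F x) = x) := by
  have hlam1 : (1:ℝ) < lam := lt_trans hξ1 hξlam
  have hlam0 : (0:ℝ) < lam := lt_trans one_pos hlam1
  have hξ0 : (0:ℝ) < ξ := lt_trans one_pos hξ1
  have hWf : IsOpen (starDomInt f) := isOpen_starDomInt f hf hfpos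
  have hWg : IsOpen (starDomInt g) := isOpen_starDomInt g hg hgpos
  set V : Set (ESp n) := starDomInt f ∩ F ⁻¹' (ξ⁻¹ • starDomInt g) with hVdef
  have hVopen : IsOpen V := by
    apply (hF.1.1.continuousOn).isOpen_inter_preimage hWf
    exact hWg.smul₀ (inv_ne_zero hξ0.ne')
  have hVW : V ⊆ starDomInt f := Set.inter_subset_left
  have hlamV : lam⁻¹ • starDom f ⊆ V := by
    intro x hx
    refine ⟨smul_starDom_subset f (inv_pos.2 hlam0) (inv_lt_one_of_one_lt₀ hlam1) hx, ?_⟩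
    exact hsub (Set.mem_image_of_mem F hx)
  -- property (i)
  have key : ∀ t ∈ Set.Icc (1:ℝ) ξ, ∀ x ∈ V, t⁻¹ • F x ∈ starDomInt g := by
    intro t ht x hx
    have ht0 : (0:ℝ) < t := lt_of_lt_of_le one_pos ht.1
    obtain ⟨y, hy, hyx⟩ := hx.2
    rw [← hyx, smul_smul]
    apply smul_mem_starDomInt g hy (by positivity)
    have h1 : t⁻¹ ≤ 1 := inv_le_one_of_one_le₀ ht.1
    have h2 : ξ⁻¹ ≤ 1 := le_of_lt (inv_lt_one_of_one_lt₀ hξ1)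
    have := mul_le_one₀ h1 (le_of_lt (inv_pos.2 hξ0)) h2
    exact this
  -- property (ii)
  have key2 : ∀ t ∈ Set.Icc (1:ℝ) ξ, ∀ x ∈ V,
      t • F' (t⁻¹ • F x) ∈ lam • starDomInt f := by
    intro t ht x hx
    have ht0 : (0:ℝ) < t := lt_of_lt_of_le one_pos ht.1
    have hz : F' (t⁻¹ • F x) ∈ starDomInt f := hF.2.2.2.1 (key t ht x hx)
    have hc0 : (0:ℝ) < lam⁻¹ * t := by positivity
    have hc1 : lam⁻¹ * t ≤ 1 := by
      have htlam : t ≤ lam := le_of_lt (lt_of_le_of_lt ht.2 hξlam)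
      calc lam⁻¹ * t ≤ lam⁻¹ * lam :=
            mul_le_mul_of_nonneg_left htlam (le_of_lt (inv_pos.2 hlam0))
        _ = 1 := inv_mul_cancel₀ hlam0.ne'
    have hmem := smul_mem_starDomInt f hz hc0 hc1
    have := Set.smul_mem_smul_set (a := lam) hmem
    rwa [smul_smul, ← mul_assoc, mul_inv_cancel₀ hlam0.ne', one_mul] at this
  -- injectivity
  have hinj : ∀ t ∈ Set.Icc (1:ℝ) ξ, Set.InjOn (fun x => t • F' (t⁻¹ • F x)) V := by
    intro t ht x hx x' hx' hxx
    have ht0 : (0:ℝ) < t := lt_of_lt_of_le one_pos ht.1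
    simp only at hxx
    have h1 : F' (t⁻¹ • F x) = F' (t⁻¹ • F x') := smul_right_injective _ ht0.ne' hxx
    have h2 : t⁻¹ • F x = t⁻¹ • F x' := by
      have := congrArg F h1
      rwa [hF.2.2.2.2.2 _ (key t ht x hx), hF.2.2.2.2.2 _ (key t ht x' hx')] at this
    have h3 : F x = F x' := smul_right_injective _ (inv_ne_zero ht0.ne') h2
    have := congrArg F' h3
    rwa [hF.2.2.2.2.1 _ (hVW hx), hF.2.2.2.2.1 _ (hVW hx')] at this
  -- symplecticity
  have hsymp : ∀ t ∈ Set.Icc (1:ℝ) ξ, IsSympOn (fun x => t • F' (t⁻¹ • F x)) V := by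
    intro t ht
    have ht0 : (0:ℝ) < t := lt_of_lt_of_le one_pos ht.1
    constructor
    · have hFV : ContDiffOn ℝ (⊤ : ℕ∞) F V := hF.1.1.mono hVW
      have hinner : ContDiffOn ℝ (⊤ : ℕ∞) (fun x => t⁻¹ • F x) V := hFV.const_smul t⁻¹
      have hcomp : ContDiffOn ℝ (⊤ : ℕ∞) (F' ∘ fun x => t⁻¹ • F x) V :=
        hF.2.1.1.comp hinner (fun x hx => key t ht x hx)
      exact hcomp.const_smul t
    · intro x hx ζ ζ'
      have hxW := hVW hx
      have ht0' : t ≠ 0 := ht0.ne'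
      have hdF : DifferentiableAt ℝ F x :=
        (hF.1.1.contDiffAt (hWf.mem_nhds hxW)).differentiableAt (by simp)
      have hyW' : t⁻¹ • F x ∈ starDomInt g := key t ht x hx
      have hdF' : DifferentiableAt ℝ F' (t⁻¹ • F x) :=
        (hF.2.1.1.contDiffAt (hWg.mem_nhds hyW')).differentiableAt (by simp)
      have h1 : HasFDerivAt (fun x => t⁻¹ • F x) (t⁻¹ • fderiv ℝ F x) x :=
        hdF.hasFDerivAt.const_smul t⁻¹
      have h2 : HasFDerivAt (F' ∘ fun x => t⁻¹ • F x)
          ((fderiv ℝ F' (t⁻¹ • F x)).comp (t⁻¹ • fderiv ℝ F x)) x :=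
        hdF'.hasFDerivAt.comp x h1
      have h3 : HasFDerivAt (fun x => t • F' (t⁻¹ • F x))
          (t • (fderiv ℝ F' (t⁻¹ • F x)).comp (t⁻¹ • fderiv ℝ F x)) x :=
        h2.const_smul t
      rw [h3.fderiv]
      simp only [ContinuousLinearMap.coe_smul', Pi.smul_apply,
        ContinuousLinearMap.coe_comp', Function.comp_apply,
        ContinuousLinearMap.smul_apply, map_smul, smul_smul,
        mul_inv_cancel₀ ht0', one_smul]
      rw [hF.2.1.2 _ hyW', hF.1.2 x hxW]
  refine ⟨V, hVopen, hlamV, hVW, fun t ht x hx => ⟨key t ht x hx, key2 t ht x hx⟩,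
    fun t ht => ⟨hinj t ht, hsymp t ht⟩, ?_, ?_⟩
  · -- joint smoothness
    set S := Set.Icc (1:ℝ) ξ ×ˢ V with hSdef
    have c1 : ContDiffOn ℝ (⊤ : ℕ∞) (fun p : ℝ × ESp n => p.1) S := contDiff_fst.contDiffOn
    have hne : ∀ p : ℝ × ESp n, p ∈ S → p.1 ≠ 0 := by
      intro p hp
      exact (lt_of_lt_of_le one_pos hp.1.1).ne'
    have cinv : ContDiffOn ℝ (⊤ : ℕ∞) (fun p : ℝ × ESp n => p.1⁻¹) S := c1.inv hne
    have cF : ContDiffOn ℝ (⊤ : ℕ∞) (fun p : ℝ × ESp n => F p.2) S :=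
      hF.1.1.comp contDiff_snd.contDiffOn (fun p hp => hVW hp.2)
    have cinner : ContDiffOn ℝ (⊤ : ℕ∞) (fun p : ℝ × ESp n => p.1⁻¹ • F p.2) S := cinv.smul cF
    have cF' : ContDiffOn ℝ (⊤ : ℕ∞) (fun p : ℝ × ESp n => F' (p.1⁻¹ • F p.2)) S :=
      hF.2.1.1.comp cinner (fun p hp => key p.1 hp.1 p.2 hp.2)
    exact c1.smul cF'
  · intro x hx
    rw [inv_one, one_smul, one_smul]
    exact hF.2.2.2.2.1 x (hVW hx)
end

section
/- Fix a field 𝔽 and δ ≥ 0. Let (a_i, b_i]_{i∈I} and (c_j, d_j]_{j∈J} be barcode data and let (V, π^V) and (W, π^W) be the associated interval-decomposed persistence modules. Suppose V and W are δ-interleaved: there exist linear maps Φ_s : V_s → W_{s+δ} and Ψ_s : W_s → V_{s+δ} for all s ∈ ℝ, commuting with the structure maps (Φ_t ∘ π^V_{s,t} = π^W_{s+δ,t+δ} ∘ Φ_s and Ψ_t ∘ π^W_{s,t} = π^V_{s+δ,t+δ} ∘ Ψ_s for s ≤ t), and satisfying Ψ_{s+δ} ∘ Φ_s = π^V_{s,s+2δ}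 and Φ_{s+δ} ∘ Ψ_s = π^W_{s,s+2δ} for all s. Then for every ε > 0 and s ∈ ℝ there is an injection from {j ∈ J : c_j < s − δ and d_j − c_j > ε + 2δ} into {i ∈ I : a_i < s and b_i − a_i > ε}; in particular, if the latter set is finite then so is the former and #{j : c_j < s − δ, d_j − c_j > ε + 2δ} ≤ #{i : a_i < s, b_i − a_i > ε}. -/
/-!
Write `J'` for the bars of `W` born before `s - δ` of length `> ε + 2δ` and `I'` for the bars
of `V` born before `s` of length `> ε`. Every `j ∈ J'` contains a window `[x j, x j + 2δ + ε]`
with `x j ≤ s - δ`. For `x ≤ q` the interleaving factors `π^W_{x, q+2δ+ε}` as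
`Φ ∘ π^V_{x+δ, q+δ+ε} ∘ Ψ`, and `π^V_{x+δ, q+δ+ε}` only passes through coordinates in `I'`.
Hence the vectors `Ψ (e_j)`, read in the coordinates `I'`, form a triangular family for the
order of the windows: pushing through `Φ` and reading coordinate `j` at time `x j + 2δ + ε`
kills every vector with an earlier window but the `j`-th. So they are linearly independent
in `F^(I')`, and `#J' ≤ #I'`.
-/

/-- The index set of bars `(a i, b i]` "alive" at parameter `s`:
`B_s = {i | a i < s ≤ b i}`. -/
def barIdx {B : Type*} (a : B → ℝ) (b : B → EReal) (s : ℝ) : Set B :=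
  {i | a i < s ∧ (s : EReal) ≤ b i}

open scoped Classical

/-- The structure map `π_{s,t} : ⨁_{i ∈ B_s} 𝔽 → ⨁_{i ∈ B_t} 𝔽` of the
interval-decomposed persistence module: the identity on the coordinates indexed by
`B_s ∩ B_t` and zero on the remaining coordinates. -/
noncomputable def structMap {B : Type*} (F : Type*) [Field F]
    (a : B → ℝ) (b : B → EReal) (s t : ℝ) :
    (↥(barIdx a b s) →₀ F) →ₗ[F] (↥(barIdx a b t) →₀ F) :=
  Finsupp.lsum F fun i =>
    if h : (i : B) ∈ barIdx a b t then Finsupp.lsingle ⟨(i : B), h⟩ else 0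

namespace Barcode

open Finsupp

theorem linearIndependent_of_triangular {R M ι κ : Type*} [Ring R] [NoZeroDivisors R]
    [AddCommGroup M] [Module R M] [LinearOrder κ] (v : ι → M) (x : ι → κ)
    (f : ι → M →ₗ[R] R) (hdiag : ∀ j, f j (v j) ≠ 0)
    (hlower : ∀ j k, k ≠ j → x k ≤ x j → f j (v k) = 0) :
    LinearIndependent R v := by
  rw [linearIndependent_iff]
  intro l hl
  by_contra hne
  obtain ⟨j, hj, hmax⟩ :=
    Finset.exists_max_image l.support x (support_nonempty_iff.mpr hne)
  have hfj : l j * f j (v j) = 0 := by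
    have := congrArg (f j) hl
    rwa [map_zero, linearCombination_apply, Finsupp.sum, map_sum,
      Finset.sum_eq_single_of_mem j hj fun k hk hkj => by
        rw [map_smul, hlower j k hkj (hmax k hk), smul_zero], map_smul, smul_eq_mul] at this
  exact mem_support_iff.mp hj ((mul_eq_zero.mp hfj).resolve_right (hdiag j))

theorem nonempty_embedding_of_linearIndependent {R ι κ : Type*} [Ring R] [Nontrivial R]
    [StrongRankCondition R] {v : ι → κ →₀ R} (hv : LinearIndependent R v) : Nonempty (ι ↪ κ) := by
  have := hv.cardinal_lift_le_rank
  rw [rank_finsupp_self, Cardinal.lift_lift] at this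
  exact Cardinal.lift_mk_le.mp this

section Transfer

variable {B : Type*} (F : Type*) [Field F]

noncomputable def transfer (S S' : Set B) : (S →₀ F) →ₗ[F] (S' →₀ F) :=
  lsum F fun i => if h : (i : B) ∈ S' then lsingle ⟨(i : B), h⟩ else 0

variable {F}

theorem transfer_single {S S' : Set B} (i : S) (r : F) :
    transfer F S S' (single i r) = if h : (i : B) ∈ S' then single ⟨i, h⟩ r else 0 := by
  rw [transfer, lsum_single]
  split_ifs <;> rfl

theorem transfer_single_apply {S S' : Set B} (i : S) (k : S') (r : F) :
    transfer F S S' (single i r) k = if (i : B) = k then r else 0 := by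
  rw [transfer_single]
  split_ifs with hi hik hik
  · rw [show k = ⟨i, hi⟩ from Subtype.ext hik.symm, single_eq_same]
  · exact single_eq_of_ne fun h => hik (congrArg Subtype.val h).symm
  · exact absurd (hik ▸ k.2) hi
  · rfl

theorem transfer_comp {S S' S'' : Set B} (h : S ∩ S'' ⊆ S') :
    transfer F S' S'' ∘ₗ transfer F S S' = transfer F S S'' := by
  refine lhom_ext fun i r => ?_
  rw [LinearMap.comp_apply, transfer_single]
  split_ifs with hi
  · rw [transfer_single, transfer_single]
  · rw [map_zero, transfer_single, dif_neg fun hi'' => hi (h ⟨i.2, hi''⟩)]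

theorem structMap_eq_transfer (a : B → ℝ) (b : B → EReal) (s t : ℝ) :
    structMap F a b s t = transfer F (barIdx a b s) (barIdx a b t) :=
  rfl

theorem barIdx_inter_subset (a : B → ℝ) (b : B → EReal) {s t r : ℝ} (hst : s ≤ t)
    (htr : t ≤ r) : barIdx a b s ∩ barIdx a b r ⊆ barIdx a b t :=
  fun _ ⟨hs, hr⟩ => ⟨hs.1.trans_le hst, (EReal.coe_le_coe_iff.mpr htr).trans hr.2⟩

theorem structMap_comp (a : B → ℝ) (b : B → EReal) {s t r : ℝ} (hst : s ≤ t) (htr : t ≤ r) :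
    structMap F a b t r ∘ₗ structMap F a b s t = structMap F a b s r :=
  transfer_comp (barIdx_inter_subset a b hst htr)

end Transfer

abbrev longBars {B : Type*} (a : B → ℝ) (b : B → EReal) (s ε : ℝ) : Set B :=
  {i | a i < s ∧ (ε : EReal) < b i - (a i : EReal)}

theorem barIdx_inter_subset_longBars {B : Type*} (a : B → ℝ) (b : B → EReal) {s t u ε : ℝ}
    (hts : t ≤ s) (htu : t + ε ≤ u) : barIdx a b t ∩ barIdx a b u ⊆ longBars a b s ε := by
  rintro i ⟨⟨hit, -⟩, -, hiu⟩
  refine ⟨hit.trans_le hts, (EReal.lt_sub_iff_add_lt (.inl (EReal.coe_ne_bot _))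
    (.inl (EReal.coe_ne_top _))).mpr ?_⟩
  calc ((ε : ℝ) : EReal) + (a i : EReal) = ((ε + a i : ℝ) : EReal) := rfl
    _ < ((u : ℝ) : EReal) := EReal.coe_lt_coe_iff.mpr (by linarith)
    _ ≤ b i := hiu

theorem exists_window_of_mem_longBars {B : Type*} {a : B → ℝ} {b : B → EReal} {s η : ℝ}
    (hη : 0 ≤ η) {i : B} (hi : i ∈ longBars a b s η) :
    ∃ x ≤ s, i ∈ barIdx a b x ∧ i ∈ barIdx a b (x + η) := by
  obtain ⟨his, hlong⟩ := hi
  rw [EReal.lt_sub_iff_add_lt (.inl (EReal.coe_ne_bot _)) (.inl (EReal.coe_ne_top _))] at hlong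
  obtain ⟨r, har, hrb⟩ := EReal.lt_iff_exists_real_btwn.mp hlong
  have har : η + a i < r := EReal.coe_lt_coe_iff.mp har
  have hxr : min s (r - η) + η ≤ r := by linarith [min_le_right s (r - η)]
  have hax : a i < min s (r - η) := lt_min his (by linarith)
  refine ⟨min s (r - η), min_le_left _ _, ⟨hax, ?_⟩, ⟨by linarith, ?_⟩⟩
  · exact (EReal.coe_le_coe_iff.mpr (by linarith)).trans hrb.le
  · exact (EReal.coe_le_coe_iff.mpr hxr).trans hrb.le

section Interleaving

variable {I J F : Type*} [Field F] {a : I → ℝ} {b : I → EReal} {c : J → ℝ} {d : J → EReal}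
  {δ ε : ℝ} {Φ : ∀ s : ℝ, (barIdx a b s →₀ F) →ₗ[F] (barIdx c d (s + δ) →₀ F)}
  {Ψ : ∀ s : ℝ, (barIdx c d s →₀ F) →ₗ[F] (barIdx a b (s + δ) →₀ F)}

theorem structMap_eq_comp_through_longBars
    (hΦ : ∀ s t : ℝ, s ≤ t →
      (Φ t).comp (structMap F a b s t) = (structMap F c d (s + δ) (t + δ)).comp (Φ s))
    (hΦΨ : ∀ s : ℝ, (Φ (s + δ)).comp (Ψ s) = structMap F c d s (s + δ + δ))
    (hδ : 0 ≤ δ) (hε : 0 ≤ ε) {s x q : ℝ} (hxs : x + δ ≤ s) (hxq : x ≤ q) :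
    Φ (q + δ + ε) ∘ₗ transfer F (longBars a b s ε) (barIdx a b (q + δ + ε)) ∘ₗ
        transfer F (barIdx a b (x + δ)) (longBars a b s ε) ∘ₗ Ψ x
      = structMap F c d x (q + δ + ε + δ) :=
  calc _ = Φ (q + δ + ε) ∘ₗ structMap F a b (x + δ) (q + δ + ε) ∘ₗ Ψ x := by
        rw [← LinearMap.comp_assoc (Ψ x), transfer_comp
          (barIdx_inter_subset_longBars a b hxs (by linarith)), structMap_eq_transfer]
    _ = structMap F c d (x + δ + δ) (q + δ + ε + δ) ∘ₗ Φ (x + δ) ∘ₗ Ψ x := by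
        rw [← LinearMap.comp_assoc, hΦ _ _ (by linarith), LinearMap.comp_assoc]
    _ = _ := by
        rw [hΦΨ, structMap_comp c d (by linarith) (by linarith)]

theorem nonempty_embedding_longBars
    (hΦ : ∀ s t : ℝ, s ≤ t →
      (Φ t).comp (structMap F a b s t) = (structMap F c d (s + δ) (t + δ)).comp (Φ s))
    (hΦΨ : ∀ s : ℝ, (Φ (s + δ)).comp (Ψ s) = structMap F c d s (s + δ + δ))
    (hδ : 0 ≤ δ) (hε : 0 ≤ ε) (s : ℝ) :
    Nonempty (longBars c d (s - δ) (ε + 2 * δ) ↪ longBars a b s ε) := by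
  choose x hxs hx hx' using fun j : longBars c d (s - δ) (ε + 2 * δ) =>
    exists_window_of_mem_longBars (by linarith) j.2
  have hx'' (j) : (j : J) ∈ barIdx c d (x j + δ + ε + δ) := by
    convert hx' j using 2; ring
  let v j := transfer F (barIdx a b (x j + δ)) (longBars a b s ε) (Ψ (x j) (single ⟨j, hx j⟩ 1))
  let f j := lapply ⟨j, hx'' j⟩ ∘ₗ Φ (x j + δ + ε) ∘ₗ
    transfer F (longBars a b s ε) (barIdx a b (x j + δ + ε))
  have hfv (j k) (hkj : x k ≤ x j) : f j (v k) = if k = j then 1 else 0 := by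
    have := congrArg (· (single ⟨k, hx k⟩ 1))
      (structMap_eq_comp_through_longBars (s := s) hΦ hΦΨ hδ hε (by linarith [hxs k]) hkj)
    simp only [LinearMap.comp_apply] at this
    simp only [f, v, LinearMap.comp_apply, this, lapply_apply, structMap_eq_transfer,
      transfer_single_apply, Subtype.ext_iff]
  refine nonempty_embedding_of_linearIndependent
    (linearIndependent_of_triangular v x f (fun j => ?_) fun j k hkj hle => ?_)
  · simp [hfv j j le_rfl]
  · simp [hfv j k hle, hkj]

end Interleaving

end Barcode

theorem stmt_17_general {I J : Type*} (F : Type*) [Field F] (δ : ℝ) (hδ : 0 ≤ δ)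
    (a : I → ℝ) (b : I → EReal)
    (c : J → ℝ) (d : J → EReal)
    (Φ : ∀ s : ℝ, (↥(barIdx a b s) →₀ F) →ₗ[F] (↥(barIdx c d (s + δ)) →₀ F))
    (Ψ : ∀ s : ℝ, (↥(barIdx c d s) →₀ F) →ₗ[F] (↥(barIdx a b (s + δ)) →₀ F))
    (hΦ : ∀ s t : ℝ, s ≤ t →
      (Φ t).comp (structMap F a b s t)
        = (structMap F c d (s + δ) (t + δ)).comp (Φ s))
    (hΦΨ : ∀ s : ℝ, (Φ (s + δ)).comp (Ψ s) = structMap F c d s (s + δ + δ)) :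
    ∀ ε > (0 : ℝ), ∀ s : ℝ,
      (∃ ι : ↥{j : J | c j < s - δ ∧
                ((ε + 2 * δ : ℝ) : EReal) < d j - (c j : EReal)} →
            ↥{i : I | a i < s ∧ (ε : EReal) < b i - (a i : EReal)},
        Function.Injective ι) ∧
      ({i : I | a i < s ∧ (ε : EReal) < b i - (a i : EReal)}.Finite →
        {j : J | c j < s - δ ∧
          ((ε + 2 * δ : ℝ) : EReal) < d j - (c j : EReal)}.Finite ∧
        Nat.card ↥{j : J | c j < s - δ ∧
            ((ε + 2 * δ : ℝ) : EReal) < d j - (c j : EReal)}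
          ≤ Nat.card ↥{i : I | a i < s ∧ (ε : EReal) < b i - (a i : EReal)}) := by
  intro ε hε s
  obtain ⟨ι⟩ := Barcode.nonempty_embedding_longBars hΦ hΦΨ hδ hε.le s
  refine ⟨⟨ι, ι.injective⟩, fun hfin => ?_⟩
  have := hfin.to_subtype
  have := Finite.of_injective ι ι.injective
  exact ⟨Set.toFinite _, Nat.card_le_card_of_injective ι ι.injective⟩

/-- Suppose the interval-decomposed persistence modules associated with
barcode data `(a i, b i]_{i ∈ I}` and `(c j, d j]_{j ∈ J}` are `δ`-interleaved via maps
`Φ_s, Ψ_s` commuting with the structure maps and with `Ψ_{s+δ} ∘ Φ_s = π_{s,s+2δ}` and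
`Φ_{s+δ} ∘ Ψ_s = π_{s,s+2δ}`. Then for every `ε > 0` and `s` there is an injection from
`{j | c j < s − δ, d j − c j > ε + 2δ}` into `{i | a i < s, b i − a i > ε}`; in
particular, if the latter set is finite then so is the former and the cardinalities are
comparable. -/
theorem stmt_17 {I J : Type*} (F : Type*) [Field F] (δ : ℝ) (hδ : 0 ≤ δ)
    (a : I → ℝ) (b : I → EReal) (hab : ∀ i, (a i : EReal) < b i)
    (c : J → ℝ) (d : J → EReal) (hcd : ∀ j, (c j : EReal) < d j)
    (Φ : ∀ s : ℝ, (↥(barIdx a b s) →₀ F) →ₗ[F] (↥(barIdx c d (s + δ)) →₀ F))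
    (Ψ : ∀ s : ℝ, (↥(barIdx c d s) →₀ F) →ₗ[F] (↥(barIdx a b (s + δ)) →₀ F))
    (hΦ : ∀ s t : ℝ, s ≤ t →
      (Φ t).comp (structMap F a b s t)
        = (structMap F c d (s + δ) (t + δ)).comp (Φ s))
    (hΨ : ∀ s t : ℝ, s ≤ t →
      (Ψ t).comp (structMap F c d s t)
        = (structMap F a b (s + δ) (t + δ)).comp (Ψ s))
    (hΨΦ : ∀ s : ℝ, (Ψ (s + δ)).comp (Φ s) = structMap F a b s (s + δ + δ))
    (hΦΨ : ∀ s : ℝ, (Φ (s + δ)).comp (Ψ s) = structMap F c d s (s + δ + δ)) :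
    ∀ ε > (0 : ℝ), ∀ s : ℝ,
      (∃ ι : ↥{j : J | c j < s - δ ∧
                ((ε + 2 * δ : ℝ) : EReal) < d j - (c j : EReal)} →
            ↥{i : I | a i < s ∧ (ε : EReal) < b i - (a i : EReal)},
        Function.Injective ι) ∧
      ({i : I | a i < s ∧ (ε : EReal) < b i - (a i : EReal)}.Finite →
        {j : J | c j < s - δ ∧
          ((ε + 2 * δ : ℝ) : EReal) < d j - (c j : EReal)}.Finite ∧
        Nat.card ↥{j : J | c j < s - δ ∧
            ((ε + 2 * δ : ℝ) : EReal) < d j - (c j : EReal)}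
          ≤ Nat.card ↥{i : I | a i < s ∧ (ε : EReal) < b i - (a i : EReal)}) :=
  stmt_17_general F δ hδ a b c d Φ Ψ hΦ hΦΨ
end
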